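/- The coefficient of z_1^{r-1} z_2^{r-2} ⋯ z_{r-1}^1 z_r^0 in ∑_{σ ∈ S_r} (-1)^{l(σ)} ∏_{k<s} (z_{σ(k)} - q^{-2} z_{σ(s)}) equals ∑_{σ ∈ S_r} q^{-2 l(σ)} = q^{-r(r-1)/2} [r]!_q. -/

import Mathlib

open MvPolynomial Finset

noncomputable abbrev K1 : Type := RatFunc ℚ

noncomputable def q1 : K1 := RatFunc.X

noncomputable def qInt1 (m : ℕ) : K1 := (q1 ^ m - q1⁻¹ ^ m) / (q1 - q1⁻¹)

noncomputable def qFact1 (r : ℕ) : K1 := ∏ m ∈ Finset.Icc 1 r, qInt1 m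

/-- The number of inversions (length) of a permutation. -/
def inv1 {r : ℕ} (σ : Equiv.Perm (Fin r)) : ℕ :=
  (Finset.univ.filter (fun p : Fin r × Fin r => p.1 < p.2 ∧ σ p.2 < σ p.1)).card

/-!
Relabel the product by the values `a = σ k < b = σ s`: it becomes `∏_{a<b} ℓ_{ab}` with
`ℓ_{ab} = z_a - q⁻² z_b` if `(a, b)` is not an inversion of `σ⁻¹`, and `ℓ_{ab} = -q⁻² (z_a - q² z_b)`
otherwise. In any product `∏_{a<b} (α_{ab} z_a + β_{ab} z_b)` the variable `z_0` occurs in only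
`r - 1` factors, so the staircase monomial `z_0^{r-1} z_1^{r-2} ⋯` can only arise by taking `z_0`
from each of them, then `z_1` from the remaining ones, and so on; its coefficient is `∏ α_{ab}`.
Here this is `(-q⁻²)^{l(σ)}`, which the sign `(-1)^{l(σ)}` turns into `q^{-2 l(σ)}`.

The second equality is the Mahonian generating function `∑_σ t^{l(σ)} = ∏_{m<r} (1 + t + ⋯ + t^m)`,
proved by inserting the value `σ 0` in front of a permutation of `r - 1` letters, together with
`1 + q⁻² + ⋯ + q^{-2m} = q^{-m} [m+1]_q`.
-/

section PairProducts

variable {ι M : Type*} [LinearOrder ι] [Fintype ι] [LocallyFiniteOrderTop ι] [CommMonoid M]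

theorem prod_prod_Ioi_eq_prod_filter (f : ι → ι → M) :
    ∏ a, ∏ b ∈ Ioi a, f a b = ∏ p ∈ univ.filter (fun p : ι × ι => p.1 < p.2), f p.1 p.2 := by
  rw [prod_filter, ← univ_product_univ, prod_product]
  refine prod_congr rfl fun a _ => ?_
  rw [← filter_lt_eq_Ioi, prod_filter]

theorem prod_prod_Ioi_perm (σ : Equiv.Perm ι) (f : ι → ι → M) :
    ∏ k, ∏ s ∈ Ioi k, f (σ k) (σ s)
      = ∏ a, ∏ b ∈ Ioi a, if σ.symm a < σ.symm b then f a b else f b a := by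
  simp only [prod_prod_Ioi_eq_prod_filter]
  refine prod_nbij' (fun p => if σ p.1 < σ p.2 then (σ p.1, σ p.2) else (σ p.2, σ p.1))
    (fun p => if σ.symm p.1 < σ.symm p.2 then (σ.symm p.1, σ.symm p.2)
      else (σ.symm p.2, σ.symm p.1))
    ?_ ?_ ?_ ?_ ?_ <;> intro p hp <;> simp only [mem_filter, mem_univ, true_and] at hp ⊢ <;>
    split_ifs <;> simp_all [lt_asymm, lt_iff_le_and_ne, eq_comm]

end PairProducts

theorem prod_Ioi_ite_symm_lt_eq_pow_inv1 {M : Type*} [CommMonoid M] {n : ℕ}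
    (σ : Equiv.Perm (Fin n)) (t : M) :
    ∏ a, ∏ b ∈ Ioi a, (if σ.symm a < σ.symm b then 1 else t) = t ^ inv1 σ := by
  let f : Fin n → Fin n → M := fun x y => if x < y then 1 else t
  calc ∏ a, ∏ b ∈ Ioi a, (if σ.symm a < σ.symm b then 1 else t)
      = ∏ a, ∏ b ∈ Ioi a, (if σ.symm a < σ.symm b then f a b else f b a) := by
        refine prod_congr rfl fun a _ => prod_congr rfl fun b hb => ?_
        have hab : a < b := mem_Ioi.1 hb
        simp [f, hab, hab.not_gt]
    _ = ∏ k, ∏ s ∈ Ioi k, f (σ k) (σ s) := (prod_prod_Ioi_perm σ f).symm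
    _ = t ^ inv1 σ := by
        rw [prod_prod_Ioi_eq_prod_filter, prod_ite, prod_const_one, one_mul, prod_const,
          filter_filter, inv1]
        congr 2
        ext p
        simp only [not_lt, le_iff_lt_or_eq, EmbeddingLike.apply_eq_iff_eq]
        grind

section Staircase

noncomputable def staircase (n : ℕ) : Fin n →₀ ℕ :=
  Finsupp.equivFunOnFinite.symm fun k => n - 1 - k

theorem staircase_succ (n : ℕ) : staircase (n + 1) = (staircase n).cons n := by
  ext i
  refine Fin.cases ?_ (fun j => ?_) i
  · simp [staircase]
  · simp [staircase]
    omega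

theorem coeff_staircase_prod_linear {R : Type*} [CommSemiring R] {n : ℕ} (α β : Fin n → Fin n → R) :
    coeff (staircase n) (∏ a, ∏ b ∈ Ioi a, (C (α a b) * X a + C (β a b) * X b))
      = ∏ a, ∏ b ∈ Ioi a, α a b := by
  induction n with
  | zero => rw [Subsingleton.elim (staircase 0) 0]; simp
  | succ n ih =>
    have hC : ∀ c : R, finSuccEquiv R n (C c) = Polynomial.C (C c) := fun c => by
      simp [finSuccEquiv_apply]
    rw [staircase_succ, ← finSuccEquiv_coeff_coeff]
    simp only [Fin.prod_univ_succ, Fin.prod_Ioi_zero, Fin.prod_Ioi_succ, map_mul, map_prod,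
      map_add, hC, finSuccEquiv_X_zero, finSuccEquiv_X_succ]
    simp only [← Polynomial.C_mul, ← Polynomial.C_add, ← map_prod Polynomial.C,
      Polynomial.coeff_mul_C]
    -- the `n` factors containing `X 0` are linear in it, so `X 0 ^ n` picks their leading terms
    have hlead := Polynomial.coeff_prod_of_natDegree_le (s := univ)
      (fun j : Fin n => Polynomial.C (C (α 0 j.succ)) * Polynomial.X
        + Polynomial.C (C (β 0 j.succ) * X j)) 1 (fun j _ => by compute_degree)
    rw [card_univ, Fintype.card_fin, mul_one] at hlead
    rw [hlead]
    simp only [Polynomial.coeff_add, Polynomial.coeff_mul_X, Polynomial.coeff_C, one_ne_zero,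
      if_true, if_false, add_zero, ← map_prod, coeff_C_mul, ih]

variable {R : Type*} [CommRing R]

theorem coeff_staircase_prod_perm {n : ℕ} (σ : Equiv.Perm (Fin n)) (c : R) :
    coeff (staircase n) (∏ k, ∏ s ∈ Ioi k, (X (σ k) - C c * X (σ s))) = (-c) ^ inv1 σ := by
  have hlinear : ∀ a b : Fin n,
      (if σ.symm a < σ.symm b then X a - C c * X b else X b - C c * X a)
        = C (if σ.symm a < σ.symm b then 1 else -c) * X a
          + C (if σ.symm a < σ.symm b then -c else 1) * X b := by
    intro a b
    split_ifs <;> simp only [map_one, map_neg, one_mul] <;> ring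
  rw [prod_prod_Ioi_perm σ (fun a b => (X a - C c * X b : MvPolynomial (Fin n) R))]
  simp only [hlinear, coeff_staircase_prod_linear, prod_Ioi_ite_symm_lt_eq_pow_inv1]

theorem coeff_staircase_sum_sign_prod (n : ℕ) (c : R) :
    coeff (staircase n) (∑ σ : Equiv.Perm (Fin n),
        (-1) ^ inv1 σ * ∏ k, ∏ s ∈ Ioi k, (X (σ k) - C c * X (σ s)))
      = ∑ σ : Equiv.Perm (Fin n), c ^ inv1 σ := by
  rw [coeff_sum]
  refine sum_congr rfl fun σ _ => ?_
  rw [← C_1, ← C_neg, ← C_pow, coeff_C_mul, coeff_staircase_prod_perm, ← mul_pow, neg_one_mul,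
    neg_neg]

end Staircase

section Mahonian

noncomputable def insertPerm (n : ℕ) (pe : Fin (n + 1) × Equiv.Perm (Fin n)) :
    Equiv.Perm (Fin (n + 1)) :=
  ((finSuccEquiv n).trans pe.2.optionCongr).trans (finSuccEquiv' pe.1).symm

@[simp] theorem insertPerm_zero (n : ℕ) (pe : Fin (n + 1) × Equiv.Perm (Fin n)) :
    insertPerm n pe 0 = pe.1 := by
  simp [insertPerm]

@[simp] theorem insertPerm_succ (n : ℕ) (pe : Fin (n + 1) × Equiv.Perm (Fin n)) (i : Fin n) :
    insertPerm n pe i.succ = pe.1.succAbove (pe.2 i) := by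
  simp [insertPerm]

theorem insertPerm_bijective (n : ℕ) : Function.Bijective (insertPerm n) := by
  rw [Fintype.bijective_iff_injective_and_card]
  refine ⟨fun ⟨p, e⟩ ⟨p', e'⟩ h => ?_, by simp [Fintype.card_perm, Nat.factorial_succ]⟩
  obtain rfl : p = p' := by simpa using congrArg (· 0) h
  have : e = e' := Equiv.ext fun i => by simpa using congrArg (· i.succ) h
  rw [this]

theorem inv1_eq_sum {n : ℕ} (σ : Equiv.Perm (Fin n)) :
    inv1 σ = ∑ a, ∑ b, if a < b ∧ σ b < σ a then 1 else 0 := by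
  rw [inv1, card_filter, ← univ_product_univ, sum_product]

theorem inv1_insertPerm (n : ℕ) (pe : Fin (n + 1) × Equiv.Perm (Fin n)) :
    inv1 (insertPerm n pe) = pe.1 + inv1 pe.2 := by
  obtain ⟨p, e⟩ := pe
  have hfirst : #{i : Fin n | (e i).castSucc < p} = p := by
    calc #{i : Fin n | (e i).castSucc < p} = #{y : Fin n | (y : ℕ) < p} := by
          simp only [card_filter, Fin.lt_def, Fin.val_castSucc]
          exact Equiv.sum_comp e (fun y : Fin n => if (y : ℕ) < p then 1 else 0)
      _ = p := by rw [Fin.card_filter_val_lt]; omega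
  simp only [inv1_eq_sum, Fin.sum_univ_succ, insertPerm_zero, insertPerm_succ,
    Fin.succ_lt_succ_iff, Fin.succAbove_lt_succAbove_iff, Fin.succAbove_lt_iff_castSucc_lt,
    Fin.succ_pos, true_and, Fin.not_lt_zero, false_and, if_false, zero_add]
  simp only [← card_filter, hfirst]

theorem sum_pow_inv1 {R : Type*} [CommSemiring R] (n : ℕ) (t : R) :
    ∑ σ : Equiv.Perm (Fin n), t ^ inv1 σ = ∏ m ∈ range n, ∑ j ∈ range (m + 1), t ^ j := by
  induction n with
  | zero => simp [inv1]
  | succ n ih =>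
    calc ∑ σ, t ^ inv1 σ = ∑ pe, t ^ inv1 (insertPerm n pe) :=
          (Fintype.sum_bijective _ (insertPerm_bijective n) _ _ fun _ => rfl).symm
      _ = (∑ p : Fin (n + 1), t ^ (p : ℕ)) * ∑ e : Equiv.Perm (Fin n), t ^ inv1 e := by
          simp only [inv1_insertPerm, pow_add, Fintype.sum_prod_type, sum_mul_sum]
      _ = _ := by rw [ih, prod_range_succ, mul_comm, Fin.sum_univ_eq_sum_range (t ^ ·)]

end Mahonian

section QFactorial

variable {K : Type*} [Field K] {q : K}

theorem geom_sum_inv_sq_eq (hq : q ≠ 0) (hq2 : q ^ 2 ≠ 1) (m : ℕ) :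
    ∑ j ∈ range (m + 1), (q⁻¹ ^ 2) ^ j
      = q⁻¹ ^ m * ((q ^ (m + 1) - q⁻¹ ^ (m + 1)) / (q - q⁻¹)) := by
  have hq2' : q⁻¹ ^ 2 ≠ 1 := by rwa [inv_pow, ne_eq, inv_eq_one]
  have hsub : q - q⁻¹ ≠ 0 :=
    sub_ne_zero.2 fun h => hq2 (by rw [sq]; nth_rw 2 [h]; exact mul_inv_cancel₀ hq)
  rw [geom_sum_eq hq2']
  simp only [inv_pow]
  field_simp
  ring

theorem sum_inv_sq_pow_inv1 (hq : q ≠ 0) (hq2 : q ^ 2 ≠ 1) (n : ℕ) :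
    ∑ σ : Equiv.Perm (Fin n), q⁻¹ ^ (2 * inv1 σ)
      = q⁻¹ ^ (n * (n - 1) / 2) * ∏ m ∈ Icc 1 n, (q ^ m - q⁻¹ ^ m) / (q - q⁻¹) := by
  simp only [pow_mul, sum_pow_inv1, geom_sum_inv_sq_eq hq hq2, prod_mul_distrib]
  rw [prod_pow_eq_pow_sum, sum_range_id, ← Ico_add_one_right_eq_Icc, prod_Ico_eq_prod_range, add_tsub_cancel_right]
  simp only [add_comm 1]

end QFactorial

theorem q1_ne_zero : q1 ≠ 0 := RatFunc.X_ne_zero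

theorem q1_sq_ne_one : q1 ^ 2 ≠ 1 := by
  have hX : (Polynomial.X ^ 2 : Polynomial ℚ) ≠ 1 := fun h => by
    simpa using congrArg Polynomial.natDegree h
  simpa [q1, ← RatFunc.algebraMap_X] using (RatFunc.algebraMap_injective ℚ).ne hX

theorem statement1_general (r : ℕ) :
    MvPolynomial.coeff (Finsupp.equivFunOnFinite.symm (fun k : Fin r => r - 1 - (k : ℕ)))
      (∑ σ : Equiv.Perm (Fin r),
        (-1 : MvPolynomial (Fin r) K1) ^ inv1 σ *
          ∏ k : Fin r, ∏ s ∈ Finset.univ.filter (fun s => k < s),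
            (X (σ k) - C (q1⁻¹ ^ 2) * X (σ s)))
      = ∑ σ : Equiv.Perm (Fin r), q1⁻¹ ^ (2 * inv1 σ)
    ∧ ∑ σ : Equiv.Perm (Fin r), q1⁻¹ ^ (2 * inv1 σ)
      = q1⁻¹ ^ (r * (r - 1) / 2) * qFact1 r := by
  simp only [filter_lt_eq_Ioi]
  refine ⟨?_, sum_inv_sq_pow_inv1 q1_ne_zero q1_sq_ne_one r⟩
  simp only [pow_mul]
  exact coeff_staircase_sum_sign_prod r _

theorem statement1 (r : ℕ) (hr : 1 ≤ r) :
    MvPolynomial.coeff (Finsupp.equivFunOnFinite.symm (fun k : Fin r => r - 1 - (k : ℕ)))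
      (∑ σ : Equiv.Perm (Fin r),
        (-1 : MvPolynomial (Fin r) K1) ^ inv1 σ *
          ∏ k : Fin r, ∏ s ∈ Finset.univ.filter (fun s => k < s),
            (X (σ k) - C (q1⁻¹ ^ 2) * X (σ s)))
      = ∑ σ : Equiv.Perm (Fin r), q1⁻¹ ^ (2 * inv1 σ)
    ∧ ∑ σ : Equiv.Perm (Fin r), q1⁻¹ ^ (2 * inv1 σ)
      = q1⁻¹ ^ (r * (r - 1) / 2) * qFact1 r :=
  statement1_general r
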